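/- Let G be a finite simple graph with n vertices and m edges. The F-coindex of the edge-semitotal graph satisfies F̄(T₂(G)) = (m+n-2)·F(G) + (m+n-1)·M₁(G) + 2(m+n-1)·M₂(G) - ξ₄(G) - 3·ReZG₃(G). -/

import Mathlib

/-!
Every vertex `v` of a graph `H` on `N` vertices lies on `N - 1 - d v` edges of the complement, so
`F̄(H) = ∑ v, (N - 1 - d v) * d v ^ 2`. In `T₂(G)` we have `N = n + m`; the original vertices keep
their degrees and contribute `(N - 1) M₁ - F`, while the vertex of an edge `uv` has degree
`a + b = d u + d v` and contributes `(N - 1)((a² + b²) + 2ab) - (a³ + b³) - 3ab(a + b)`. Summing over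
edges, counted twice through their darts, `a² + b²` gives `F`, `ab` gives `M₂`, `a³ + b³` gives `ξ₄`
and `ab(a + b)` gives `ReZG₃`.
-/

open SimpleGraph Finset
open scoped Classical

noncomputable section
namespace Paper

variable {V : Type*} [Fintype V]

/-- Degree as an integer. -/
def d (G : SimpleGraph V) (v : V) : ℤ := G.degree v

/-- Number of edges. -/
def m (G : SimpleGraph V) : ℤ := G.edgeFinset.card

/-- Sum over unordered edges of a symmetric vertex-pair function. -/
def edgeSum (G : SimpleGraph V) (f : V → V → ℤ) (hf : ∀ u v, f u v = f v u) : ℤ :=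
  ∑ e ∈ G.edgeFinset, Sym2.lift ⟨f, hf⟩ e

/-- First Zagreb index. -/
def M1 (G : SimpleGraph V) : ℤ := ∑ v, d G v ^ 2

/-- Second Zagreb index. -/
def M2 (G : SimpleGraph V) : ℤ :=
  edgeSum G (fun u v => d G u * d G v) (by intros; ring)

/-- F-index. -/
def F (G : SimpleGraph V) : ℤ := ∑ v, d G v ^ 3

/-- ξ₄. -/
def xi4 (G : SimpleGraph V) : ℤ := ∑ v, d G v ^ 4

/-- Redefined third Zagreb index. -/
def ReZG3 (G : SimpleGraph V) : ℤ :=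
  edgeSum G (fun u v => d G u * d G v * (d G u + d G v)) (by intros; ring)

/-- F-coindex: sum over edges of the complement with degrees in G. -/
def Fbar (G : SimpleGraph V) : ℤ :=
  edgeSum Gᶜ (fun u v => d G u ^ 2 + d G v ^ 2) (by intros; ring)

/-- Subdivision graph. -/
def subdivision (G : SimpleGraph V) : SimpleGraph (V ⊕ G.edgeSet) where
  Adj x y :=
    match x, y with
    | Sum.inl u, Sum.inr e => u ∈ (e : Sym2 V)
    | Sum.inr e, Sum.inl u => u ∈ (e : Sym2 V)
    | _, _ => False
  symm := by constructor; rintro (u | e) (v | f) h <;> first | exact h | exact h.elim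
  loopless := by constructor; rintro (u | e) <;> simp

/-- Vertex-semitotal graph. -/
def vertexSemitotal (G : SimpleGraph V) : SimpleGraph (V ⊕ G.edgeSet) where
  Adj x y :=
    match x, y with
    | Sum.inl u, Sum.inl v => G.Adj u v
    | Sum.inl u, Sum.inr e => u ∈ (e : Sym2 V)
    | Sum.inr e, Sum.inl u => u ∈ (e : Sym2 V)
    | _, _ => False
  symm := by
    constructor
    rintro (u | e) (v | f) h
    · exact G.adj_symm h
    · exact h
    · exact h
    · exact h.elim
  loopless := by
    constructor
    rintro (u | e) h
    · exact G.loopless.irrefl u h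
    · exact h

/-- Edge-semitotal graph. -/
def edgeSemitotal (G : SimpleGraph V) : SimpleGraph (V ⊕ G.edgeSet) where
  Adj x y :=
    match x, y with
    | Sum.inl u, Sum.inr e => u ∈ (e : Sym2 V)
    | Sum.inr e, Sum.inl u => u ∈ (e : Sym2 V)
    | Sum.inr e, Sum.inr f => e ≠ f ∧ ∃ v, v ∈ (e : Sym2 V) ∧ v ∈ (f : Sym2 V)
    | _, _ => False
  symm := by
    constructor
    rintro (u | e) (v | f) h
    · exact h.elim
    · exact h
    · exact h
    · obtain ⟨hne, w, h1, h2⟩ := h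
      exact ⟨hne.symm, w, h2, h1⟩
  loopless := by
    constructor
    rintro (u | e) h
    · exact h
    · exact h.1 rfl

/-- Total graph. -/
def total (G : SimpleGraph V) : SimpleGraph (V ⊕ G.edgeSet) where
  Adj x y :=
    match x, y with
    | Sum.inl u, Sum.inl v => G.Adj u v
    | Sum.inl u, Sum.inr e => u ∈ (e : Sym2 V)
    | Sum.inr e, Sum.inl u => u ∈ (e : Sym2 V)
    | Sum.inr e, Sum.inr f => e ≠ f ∧ ∃ v, v ∈ (e : Sym2 V) ∧ v ∈ (f : Sym2 V)
  symm := by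
    constructor
    rintro (u | e) (v | f) h
    · exact G.adj_symm h
    · exact h
    · exact h
    · obtain ⟨hne, w, h1, h2⟩ := h
      exact ⟨hne.symm, w, h2, h1⟩
  loopless := by
    constructor
    rintro (u | e) h
    · exact G.loopless.irrefl u h
    · exact h.1 rfl

/-- Paraline graph: line graph of the subdivision graph. -/
def paraline (G : SimpleGraph V) : SimpleGraph (subdivision G).edgeSet :=
  (subdivision G).lineGraph

section DartSums

variable (H : SimpleGraph V)

lemma sum_dart_edge (g : H.edgeSet → ℤ) :
    ∑ x : H.Dart, g ⟨x.edge, x.edge_mem⟩ = 2 * ∑ e : H.edgeSet, g e := by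
  rw [← Finset.sum_fiberwise' _ (fun x : H.Dart => (⟨x.edge, x.edge_mem⟩ : H.edgeSet)) g,
    Finset.mul_sum]
  refine Finset.sum_congr rfl fun e _ => ?_
  have hfiber : #{x : H.Dart | (⟨x.edge, x.edge_mem⟩ : H.edgeSet) = e} = 2 := by
    simpa only [Subtype.ext_iff] using H.dart_edge_fiber_card e e.2
  rw [Finset.sum_const, hfiber, two_nsmul, two_mul]

lemma sum_dart_fst (f : V → ℤ) : ∑ x : H.Dart, f x.fst = ∑ v, d H v * f v := by
  rw [← Finset.sum_fiberwise' _ (fun x : H.Dart => x.fst) f]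
  refine Finset.sum_congr rfl fun v _ => ?_
  rw [Finset.sum_const, H.dart_fst_fiber_card_eq_degree, nsmul_eq_mul, d]

lemma sum_dart_snd (f : V → ℤ) : ∑ x : H.Dart, f x.snd = ∑ x : H.Dart, f x.fst :=
  Equiv.sum_comp (Function.Involutive.toPerm _ Dart.symm_involutive) (fun x => f x.fst)

lemma sum_dart_add (f : V → ℤ) :
    ∑ x : H.Dart, (f x.fst + f x.snd) = 2 * ∑ v, d H v * f v := by
  rw [Finset.sum_add_distrib, sum_dart_snd, sum_dart_fst, two_mul]

lemma two_mul_edgeSum (f : V → V → ℤ) (hf : ∀ u v, f u v = f v u) :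
    2 * edgeSum H f hf = ∑ x : H.Dart, f x.fst x.snd := by
  rw [edgeSum, edgeFinset, ← Finset.sum_set_coe]
  exact (sum_dart_edge H fun e => Sym2.lift ⟨f, hf⟩ e).symm

lemma edgeSum_add (f : V → ℤ) :
    edgeSum H (fun u v => f u + f v) (fun _ _ => add_comm _ _) = ∑ v, d H v * f v := by
  have h := two_mul_edgeSum H (fun u v => f u + f v) (fun _ _ => add_comm _ _)
  rw [sum_dart_add] at h
  exact mul_left_cancel₀ two_ne_zero h

lemma Fbar_eq_sum : Fbar H = ∑ v, ((Fintype.card V : ℤ) - 1 - d H v) * d H v ^ 2 := by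
  rw [Fbar, edgeSum_add Hᶜ fun v => d H v ^ 2]
  refine Finset.sum_congr rfl fun v _ => ?_
  have hlt := H.degree_lt_card_verts v
  rw [d, d, degree_compl, Nat.cast_sub (by omega), Nat.cast_sub (by omega)]
  push_cast
  ring

end DartSums

lemma d_eq_sum_ite (H : SimpleGraph V) (x : V) : d H x = ∑ y, if H.Adj x y then 1 else 0 := by
  rw [Finset.sum_boole, d, ← card_neighborFinset_eq_degree, neighborFinset_eq_filter]

lemma d_eq_sum_edgeSet_ite (G : SimpleGraph V) (u : V) :
    d G u = ∑ e : G.edgeSet, if u ∈ (e : Sym2 V) then 1 else 0 := by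
  rw [Finset.sum_set_coe (f := fun e : Sym2 V => if u ∈ e then (1 : ℤ) else 0),
    Finset.sum_boole, d, ← card_incidenceFinset_eq_degree, incidenceFinset_eq_filter, edgeFinset]

section EdgeSemitotal

variable {G : SimpleGraph V}

lemma d_edgeSemitotal_inl (u : V) : d (edgeSemitotal G) (Sum.inl u) = d G u := by
  have hvert (w : V) : ¬ (edgeSemitotal G).Adj (Sum.inl u) (Sum.inl w) := id
  rw [d_eq_sum_ite, Fintype.sum_sum_type, d_eq_sum_edgeSet_ite]
  simp only [hvert, if_false, Finset.sum_const_zero, zero_add]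
  exact Finset.sum_congr rfl fun _ _ => if_congr Iff.rfl rfl rfl

lemma d_edgeSemitotal_inr {u v : V} (h : G.Adj u v) :
    d (edgeSemitotal G) (Sum.inr ⟨s(u, v), h⟩) = d G u + d G v := by
  set e : G.edgeSet := ⟨s(u, v), h⟩
  have hends : ∑ w, (if (edgeSemitotal G).Adj (Sum.inr e) (Sum.inl w) then 1 else 0 : ℤ) =
      2 := by
    have hfilter : ({w | (edgeSemitotal G).Adj (Sum.inr e) (Sum.inl w)} : Finset V) = {u, v} := by
      ext w
      simp [edgeSemitotal, e]
    rw [Finset.sum_boole, hfilter, Finset.card_pair h.ne, Nat.cast_ofNat]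
  -- two edges sharing both endpoints coincide, so only `e` itself is counted twice
  have hedge (f : G.edgeSet) :
      (if (edgeSemitotal G).Adj (Sum.inr e) (Sum.inr f) then 1 else 0 : ℤ) =
        (if u ∈ (f : Sym2 V) then 1 else 0) + (if v ∈ (f : Sym2 V) then 1 else 0) -
          2 * if f = e then 1 else 0 := by
    by_cases hfe : f = e
    · subst hfe
      simp [edgeSemitotal, e]
    · have hnot : ¬ (u ∈ (f : Sym2 V) ∧ v ∈ (f : Sym2 V)) := fun huv =>
        hfe (Subtype.ext ((Sym2.mem_and_mem_iff h.ne).1 huv))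
      have hadj : (edgeSemitotal G).Adj (Sum.inr e) (Sum.inr f) ↔
          u ∈ (f : Sym2 V) ∨ v ∈ (f : Sym2 V) := by
        simp [edgeSemitotal, e, Ne.symm hfe]
      by_cases hu : u ∈ (f : Sym2 V) <;> by_cases hv : v ∈ (f : Sym2 V) <;> simp_all
  rw [d_eq_sum_ite, Fintype.sum_sum_type, hends, Finset.sum_congr rfl fun f _ => hedge f,
    Finset.sum_sub_distrib, Finset.sum_add_distrib, ← Finset.mul_sum, Finset.sum_ite_eq',
    ← d_eq_sum_edgeSet_ite, ← d_eq_sum_edgeSet_ite, if_pos (Finset.mem_univ e)]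
  ring

end EdgeSemitotal

section EdgeSemitotalSums

variable (G : SimpleGraph V)

lemma sum_sub_d_mul_d_sq_edgeSemitotal_inl (c : ℤ) :
    ∑ u : V, (c - d (edgeSemitotal G) (Sum.inl u)) * d (edgeSemitotal G) (Sum.inl u) ^ 2 =
      c * M1 G - F G := by
  simp only [d_edgeSemitotal_inl, M1, F, Finset.mul_sum, ← Finset.sum_sub_distrib]
  exact Finset.sum_congr rfl fun _ _ => by ring

lemma sum_sub_d_mul_d_sq_edgeSemitotal_inr (c : ℤ) :
    ∑ e : G.edgeSet, (c - d (edgeSemitotal G) (Sum.inr e)) * d (edgeSemitotal G) (Sum.inr e) ^ 2 =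
      c * (F G + 2 * M2 G) - xi4 G - 3 * ReZG3 G := by
  have hF : ∑ x : G.Dart, (d G x.fst ^ 2 + d G x.snd ^ 2) = 2 * F G := by
    rw [sum_dart_add G fun v => d G v ^ 2, F]
    exact congrArg (2 * ·) (Finset.sum_congr rfl fun _ _ => by ring)
  have hxi4 : ∑ x : G.Dart, (d G x.fst ^ 3 + d G x.snd ^ 3) = 2 * xi4 G := by
    rw [sum_dart_add G fun v => d G v ^ 3, xi4]
    exact congrArg (2 * ·) (Finset.sum_congr rfl fun _ _ => by ring)
  have hM2 : ∑ x : G.Dart, d G x.fst * d G x.snd = 2 * M2 G := by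
    rw [M2, two_mul_edgeSum]
  have hReZG3 : ∑ x : G.Dart, d G x.fst * d G x.snd * (d G x.fst + d G x.snd) = 2 * ReZG3 G := by
    rw [ReZG3, two_mul_edgeSum]
  apply mul_left_cancel₀ (two_ne_zero' ℤ)
  calc _ = ∑ x : G.Dart, (c - (d G x.fst + d G x.snd)) * (d G x.fst + d G x.snd) ^ 2 := by
        rw [← sum_dart_edge]
        exact Finset.sum_congr rfl fun x _ => by rw [← d_edgeSemitotal_inr x.adj]; rfl
    _ = ∑ x : G.Dart, (c * ((d G x.fst ^ 2 + d G x.snd ^ 2) + 2 * (d G x.fst * d G x.snd)) -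
          (d G x.fst ^ 3 + d G x.snd ^ 3) -
          3 * (d G x.fst * d G x.snd * (d G x.fst + d G x.snd))) :=
        Finset.sum_congr rfl fun _ _ => by ring
    _ = 2 * (c * (F G + 2 * M2 G) - xi4 G - 3 * ReZG3 G) := by
        simp only [Finset.sum_sub_distrib, Finset.sum_add_distrib, ← Finset.mul_sum,
          hF, hM2, hxi4, hReZG3]
        ring

end EdgeSemitotalSums

theorem stmt13 {V : Type*} [Fintype V] (G : SimpleGraph V) :
    Fbar (edgeSemitotal G) =
      (m G + (Fintype.card V : ℤ) - 2) * F G + (m G + (Fintype.card V : ℤ) - 1) * M1 G +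
        2 * (m G + (Fintype.card V : ℤ) - 1) * M2 G - xi4 G - 3 * ReZG3 G := by
  have hcard : (Fintype.card (V ⊕ G.edgeSet) : ℤ) = m G + Fintype.card V := by
    rw [Fintype.card_sum, m, edgeFinset_card, Nat.cast_add, add_comm]
  rw [Fbar_eq_sum, hcard, Fintype.sum_sum_type, sum_sub_d_mul_d_sq_edgeSemitotal_inl,
    sum_sub_d_mul_d_sq_edgeSemitotal_inr]
  ring

end Paper
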